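/- Let n = 3^k, let 1 ≤ j ≤ k − 2, and suppose the cubic MRS function f = (1, r, s) (with 1 < r < s ≤ n) lies in an orbit of the action of G_n of size exactly v(j) = 2·3^j. Then for every integer τ not divisible by 3: (r − 1)τ^{v(j)} + 1 ≡ r (mod 3^k) and (s − 1)τ^{v(j)} + 1 ≡ s (mod 3^k); and moreover r ≡ 1 (mod 3^{k−j−1}) and s ≡ 1 (mod 3^{k−j−1}). -/

import Mathlib

/-!
Write `(1, r, s) = f_{a,b} := ∑ᵢ xᵢ x_{i+a} x_{i+b}` with offsets `a = r - 1`, `b = s - 1` in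
`ZMod 3^k`; then `σ_u · f_{a,b} = f_{ua,ub}`. By orbit–stabilizer the stabilizer of `(1, r, s)` has
order `3^(k-j-1)`, so all its elements are `≡ 1 (mod 3)`. Evaluating `f_{a,b} = f_{ua,ub}` at the
indicator of `{0, a, b}` (where the left side is the parity of the odd order of a translation
stabilizer, so `1`) gives a translate `m + u • {0, a, b}` inside `{0, a, b}`; for `u ≡ 1 (mod 3)`
this forces `u a = a` and `u b = b`. So `u ↦ u - 1` embeds the stabilizer into the annihilator of
`a`, of order `gcd(3^k, a)`, whence `3^(k-j-1) ∣ r - 1`, and likewise for `s`. The congruences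
then follow from `τ^(2·3^j) ≡ 1 (mod 3^(j+1))`.
-/

/-- Boolean functions in `n` variables, with variables indexed by `ZMod n`
(index `i : ZMod n` corresponds to the variable `x_{i+1}` in 1-indexed notation,
so that "`a Mod n`" arithmetic on subscripts becomes arithmetic in `ZMod n`). -/
abbrev BF (n : ℕ) := (ZMod n → ZMod 2) → ZMod 2

/-- The cubic MRS function `(1,j,k)` in `n` variables:
`x ↦ Σ_{i=1}^n x_i x_{(i+j-1) Mod n} x_{(i+k-1) Mod n}`, the sum taken in `GF(2)`. -/
def cubicMRS (n : ℕ) [NeZero n] (j k : ℕ) : BF n :=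
  fun x => ∑ i : ZMod n,
    x i * x (i + ((j - 1 : ℕ) : ZMod n)) * x (i + ((k - 1 : ℕ) : ZMod n))

/-- `C_n`: the set of all cubic MRS functions `(1,j,k)`, `1 < j < k ≤ n`, in `n` variables. -/
def cubicSet (n : ℕ) [NeZero n] : Set (BF n) :=
  {f | ∃ j k : ℕ, 1 < j ∧ j < k ∧ k ≤ n ∧ f = cubicMRS n j k}

/-- The set of cubic MRS functions `(1,j,k)` with `1 < j, k ≤ n`, `j ≠ k`. -/
def cubicSetNe (n : ℕ) [NeZero n] : Set (BF n) :=
  {f | ∃ j k : ℕ, 1 < j ∧ j ≤ n ∧ 1 < k ∧ k ≤ n ∧ j ≠ k ∧ f = cubicMRS n j k}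

/-- The action of a permutation `μ` of the variables on a Boolean function:
`(μ·f)(x₁,…,xₙ) = f(x_{μ(1)},…,x_{μ(n)})`. -/
def permAct {n : ℕ} (μ : Equiv.Perm (ZMod n)) (f : BF n) : BF n :=
  fun x => f (fun i => x (μ i))

/-- A Boolean function is rotation symmetric if it is invariant under the cyclic
shift of the variables. -/
def rotSym {n : ℕ} (f : BF n) : Prop :=
  ∀ x : ZMod n → ZMod 2, f (fun i => x (i + 1)) = f x

/-- A permutation `μ` preserves rotation symmetry (for cubic MRS functions in `n`
variables) if `μ·f` is rotation symmetric for every cubic MRS function `f`. -/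
def preservesRS (n : ℕ) [NeZero n] (μ : Equiv.Perm (ZMod n)) : Prop :=
  ∀ f ∈ cubicSetNe n, rotSym (permAct μ f)

/-- The permutation `σ_{τ,n} : i ↦ ((i-1)τ + 1) Mod n` of the variables, for `τ` a
unit mod `n`; in the 0-indexed coordinates used here it is `i ↦ τ·i` on `ZMod n`. -/
def sigmaPerm {n : ℕ} (u : (ZMod n)ˣ) : Equiv.Perm (ZMod n) where
  toFun := fun i => (u : ZMod n) * i
  invFun := fun i => ((u⁻¹ : (ZMod n)ˣ) : ZMod n) * i
  left_inv := fun i => by simp [← mul_assoc]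
  right_inv := fun i => by simp [← mul_assoc]

/-- The orbit of a Boolean function `f` under the action of the group
`G_n = {σ_{τ,n} : gcd(τ,n) = 1}`. -/
def orbit (n : ℕ) [NeZero n] (f : BF n) : Set (BF n) :=
  {g | ∃ u : (ZMod n)ˣ, g = permAct (sigmaPerm u) f}

/-- The set of orbits of the action of `G_n` on the set `C_n` of cubic MRS functions. -/
def orbitsOn (n : ℕ) [NeZero n] : Set (Set (BF n)) :=
  {S | ∃ f ∈ cubicSet n, S = orbit n f}

open Finset Pointwise

theorem mul_eq_self_of_mul_mem {R : Type*} [CommRing R] {w a b : R} (hw : IsUnit w)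
    (hw1 : IsUnit (w + 1)) (ha : w * a = 0 ∨ w * a = a ∨ w * a = b)
    (hb : w * b = 0 ∨ w * b = a ∨ w * b = b) : w * a = a ∧ w * b = b := by
  have fix_of_zero {x : R} (hx : w * x = 0) : w * x = x := by
    rw [hx, hw.mul_right_eq_zero.mp hx]
  replace ha : w * a = a ∨ w * a = b := by
    rcases ha with ha | ha | ha
    exacts [.inl (fix_of_zero ha), .inl ha, .inr ha]
  replace hb : w * b = b ∨ w * b = a := by
    rcases hb with hb | hb | hb
    exacts [.inl (fix_of_zero hb), .inr hb, .inl hb]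
  rcases ha with ha | ha <;> rcases hb with hb | hb
  · exact ⟨ha, hb⟩
  · obtain rfl : b = a := hw.mul_left_cancel (hb.trans ha.symm)
    exact ⟨ha, hb⟩
  · obtain rfl : a = b := hw.mul_left_cancel (ha.trans hb.symm)
    exact ⟨ha, hb⟩
  · have hfix : w * a = a := by
      have := hw1.mul_right_eq_zero.mp
        (by linear_combination w * ha + hb : (w + 1) * (w * a - a) = 0)
      linear_combination this
    obtain rfl : a = b := hfix.symm.trans ha
    exact ⟨hfix, hfix⟩

theorem mul_eq_self_of_vadd_subset {R : Type*} [CommRing R] [DecidableEq R]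
    (h3 : IsNilpotent (3 : R)) {a b m t : R}
    (h : m +ᵥ ({0, (1 + 3 * t) * a, (1 + 3 * t) * b} : Finset R) ⊆ {0, a, b}) :
    (1 + 3 * t) * a = a ∧ (1 + 3 * t) * b = b := by
  have h3t (x : R) : IsNilpotent (3 * x) := (Commute.all 3 x).isNilpotent_mul_right h3
  have h3fix {x : R} (hx : 3 * x = 0) : (1 + 3 * t) * x = x := by linear_combination t * hx
  have hw : IsUnit (1 + 3 * t) := (h3t t).isUnit_one_add
  have hw1 : IsUnit (1 + 3 * t + 1) := by
    convert (h3t (1 + t)).isUnit_sub_one using 1; ring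
  wlog hma : m = 0 ∨ m = a generalizing a b
  · have hm : m ∈ ({0, a, b} : Finset R) := by
      simpa using h (Finset.vadd_mem_vadd_finset (Finset.mem_insert_self 0 _))
    rw [Finset.pair_comm, Finset.pair_comm a] at h
    refine (this h ?_).symm
    simp only [Finset.mem_insert, Finset.mem_singleton] at hm
    tauto
  simp only [Finset.vadd_finset_insert, Finset.vadd_finset_singleton, Finset.insert_subset_iff,
    Finset.singleton_subset_iff, Finset.mem_insert, Finset.mem_singleton, vadd_eq_add,
    add_zero] at h
  obtain ⟨-, ha, hb⟩ := h
  rcases eq_or_ne m 0 with rfl | hm0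
  · simp only [zero_add] at ha hb
    exact mul_eq_self_of_mul_mem hw hw1 ha hb
  obtain rfl : a = m := (hma.resolve_left hm0).symm
  have eq_zero_of_add {x : R} (hx : a + (1 + 3 * t) * x = a) : x = 0 :=
    hw.mul_right_eq_zero.mp (by linear_combination hx)
  have hab : a + (1 + 3 * t) * a = b := by
    rcases ha with ha | ha | ha
    · exact absurd (hw1.mul_right_eq_zero.mp (by linear_combination ha)) hm0
    · exact absurd (eq_zero_of_add ha) hm0
    · exact ha
  have hb0 : a + (1 + 3 * t) * b = 0 := by
    rcases hb with hb | hb | hb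
    · exact hb
    · obtain rfl := eq_zero_of_add hb
      exact absurd (hw1.mul_right_eq_zero.mp (by linear_combination hab)) hm0
    · obtain rfl : b = a := hw.mul_left_cancel (by linear_combination hb - hab)
      exact absurd (eq_zero_of_add hab) hm0
  -- `z ↦ a + w z` with `w = 1 + 3 t` cycles `0 ↦ a ↦ b ↦ 0`, so `(w² + w + 1) a = 0`,
  -- and `w² + w + 1 = 3 (1 + 3 (t + t²))`
  have h3a : 3 * a = 0 := (h3t (t + t ^ 2)).isUnit_one_add.mul_right_eq_zero.mp
    (by linear_combination (1 + 3 * t) * hab + hb0)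
  have h3b : 3 * b = 0 := by linear_combination 2 * h3a + 3 * t * h3a - 3 * hab
  exact ⟨h3fix h3a, h3fix h3b⟩

theorem ZMod.exists_eq_one_add_mul_of_pow_eq_one {p m e : ℕ} [Fact p.Prime] [NeZero m]
    (hpm : p ∣ m) {u : ZMod m} (hu : u ^ p ^ e = 1) : ∃ t, u = 1 + p * t := by
  have hcast : ZMod.castHom hpm (ZMod p) (u - 1) = 0 := by
    rw [map_sub, map_one, sub_eq_zero, ← ZMod.pow_card_pow (n := e) (ZMod.castHom hpm (ZMod p) u),
      ← map_pow, hu, map_one]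
  rw [← ZMod.natCast_zmod_val (u - 1), map_natCast, ZMod.natCast_eq_zero_iff] at hcast
  obtain ⟨t, ht⟩ := hcast
  refine ⟨t, ?_⟩
  rw [← sub_eq_iff_eq_add', ← ZMod.natCast_zmod_val (u - 1), ht, Nat.cast_mul]

theorem ZMod.card_ker_mulLeft {n : ℕ} [NeZero n] (c : ℕ) :
    Nat.card (AddMonoidHom.mulLeft (c : ZMod n)).ker = n.gcd c := by
  have hrange :
      (AddMonoidHom.mulLeft (c : ZMod n)).range = AddSubgroup.zmultiples (c : ZMod n) := by
    ext x
    simp only [AddMonoidHom.mem_range, AddSubgroup.mem_zmultiples_iff, AddMonoidHom.coe_mulLeft,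
      zsmul_eq_mul]
    constructor
    · rintro ⟨y, rfl⟩
      exact ⟨y.val, by rw [Int.cast_natCast, ZMod.natCast_zmod_val, mul_comm]⟩
    · rintro ⟨k, rfl⟩
      exact ⟨k, mul_comm _ _⟩
  have h := (AddMonoidHom.mulLeft (c : ZMod n)).ker.card_mul_index
  rw [AddSubgroup.index_ker, hrange, Nat.card_zmultiples, ZMod.addOrderOf_coe _ (NeZero.ne n),
    Nat.card_zmod] at h
  have hpos : 0 < n / n.gcd c :=
    Nat.div_pos (Nat.gcd_le_left c (NeZero.pos n)) (Nat.gcd_pos_of_pos_left c (NeZero.pos n))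
  exact Nat.eq_of_mul_eq_mul_right hpos (h.trans (Nat.mul_div_cancel' (Nat.gcd_dvd_left n c)).symm)

theorem ZMod.card_stabilizer_units_le_gcd {n : ℕ} [NeZero n] (c : ℕ) :
    Nat.card (MulAction.stabilizer (ZMod n)ˣ (c : ZMod n)) ≤ n.gcd c := by
  rw [← ZMod.card_ker_mulLeft]
  refine Nat.card_le_card_of_injective (fun u => ⟨((u : (ZMod n)ˣ) : ZMod n) - 1, ?_⟩)
    fun u v huv => ?_
  · have hu := MulAction.mem_stabilizer_iff.mp u.2
    rw [Units.smul_def, smul_eq_mul] at hu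
    rw [AddMonoidHom.mem_ker, AddMonoidHom.coe_mulLeft]
    linear_combination hu
  · ext
    simpa using congrArg Subtype.val huv

theorem Nat.pow_dvd_of_pow_le_gcd {p k e c : ℕ} (hp : p.Prime) (h : p ^ e ≤ (p ^ k).gcd c) :
    p ^ e ∣ c := by
  obtain ⟨i, -, hi⟩ := (Nat.dvd_prime_pow hp).mp (Nat.gcd_dvd_left (p ^ k) c)
  rw [hi] at h
  exact (pow_dvd_pow p ((Nat.pow_le_pow_iff_right hp.one_lt).mp h)).trans
    (hi ▸ Nat.gcd_dvd_right _ _)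

theorem ZMod.pow_dvd_of_le_stabilizer {p k e c : ℕ} (hp : p.Prime) [NeZero (p ^ k)]
    {H : Subgroup (ZMod (p ^ k))ˣ} (hH : Nat.card H = p ^ e)
    (hle : H ≤ MulAction.stabilizer (ZMod (p ^ k))ˣ (c : ZMod (p ^ k))) : p ^ e ∣ c :=
  Nat.pow_dvd_of_pow_le_gcd hp <|
    hH ▸ (Subgroup.card_le_of_le hle).trans (ZMod.card_stabilizer_units_le_gcd c)

theorem Nat.sub_one_mul_pow_totient_add_one_modEq {m d c τ : ℕ} (hc : 1 ≤ c)
    (hτ : τ.Coprime d) (hm : m ∣ (c - 1) * d) : (c - 1) * τ ^ d.totient + 1 ≡ c [MOD m] := by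
  have h := (((Nat.ModEq.pow_totient hτ).mul_left' (c - 1)).of_dvd hm).add_right 1
  rwa [mul_one, Nat.sub_add_cancel hc] at h

def mrsOffsets (n : ℕ) [NeZero n] (a b : ZMod n) : BF n :=
  fun x => ∑ i, x i * x (i + a) * x (i + b)

section

variable {n : ℕ} [NeZero n]

theorem cubicMRS_eq_mrsOffsets (r s : ℕ) :
    cubicMRS n r s = mrsOffsets n ((r - 1 : ℕ) : ZMod n) ((s - 1 : ℕ) : ZMod n) := rfl

theorem permAct_sigmaPerm_mrsOffsets (u : (ZMod n)ˣ) (a b : ZMod n) :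
    permAct (sigmaPerm u) (mrsOffsets n a b) = mrsOffsets n (u * a) (u * b) := by
  funext x
  refine Fintype.sum_equiv (sigmaPerm u) _ _ fun i => ?_
  simp only [sigmaPerm, Equiv.coe_fn_mk, mul_add]

theorem mrsOffsets_apply_indicator (S : Finset (ZMod n)) (a b : ZMod n) :
    mrsOffsets n a b (fun i => if i ∈ S then 1 else 0) =
      (#{i : ZMod n | i +ᵥ ({0, a, b} : Finset (ZMod n)) ⊆ S} : ZMod 2) := by
  simp only [mrsOffsets, Finset.vadd_finset_insert, Finset.vadd_finset_singleton,
    Finset.insert_subset_iff, Finset.singleton_subset_iff, vadd_eq_add, add_zero, ← ite_and,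
    mul_ite, mul_one, mul_zero]
  rw [Finset.sum_boole]
  simp only [and_comm, and_assoc]

theorem mrsOffsets_apply_indicator_self (hn : Odd n) (a b : ZMod n) :
    mrsOffsets n a b (fun i => if i ∈ ({0, a, b} : Finset (ZMod n)) then 1 else 0) = 1 := by
  set S : Finset (ZMod n) := {0, a, b}
  have hstab : #{i : ZMod n | i +ᵥ S ⊆ S} = Nat.card (AddAction.stabilizer (ZMod n) S) := by
    simp only [AddAction.mem_stabilizer_finset_iff_vadd_finset_subset.symm]
    rw [← Fintype.card_subtype, Nat.card_eq_fintype_card]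
  rw [mrsOffsets_apply_indicator, hstab, ZMod.natCast_eq_one_iff_odd]
  exact hn.of_dvd_nat ((AddSubgroup.card_addSubgroup_dvd_card _).trans (Nat.card_zmod n).dvd)

theorem exists_vadd_subset_of_mrsOffsets_eq (hn : Odd n) {a b c d : ZMod n}
    (h : mrsOffsets n a b = mrsOffsets n c d) :
    ∃ m : ZMod n, m +ᵥ ({0, c, d} : Finset (ZMod n)) ⊆ {0, a, b} := by
  have := mrsOffsets_apply_indicator_self hn a b
  rw [h, mrsOffsets_apply_indicator] at this
  by_contra! hne
  simp [Finset.filter_false_of_mem fun i _ => hne i] at this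

end

instance {n : ℕ} : MulAction (ZMod n)ˣ (BF n) where
  smul u f := permAct (sigmaPerm u) f
  one_smul f := funext fun x => congrArg f (funext fun i => congrArg x (one_mul i))
  mul_smul u v f := funext fun x =>
    congrArg f (funext fun i => congrArg x (mul_assoc (u : ZMod n) v i))

theorem smul_eq_permAct {n : ℕ} (u : (ZMod n)ˣ) (f : BF n) : u • f = permAct (sigmaPerm u) f :=
  rfl

theorem orbit_eq_mulActionOrbit {n : ℕ} [NeZero n] (f : BF n) :
    orbit n f = MulAction.orbit (ZMod n)ˣ f := by
  ext g
  simp only [orbit, Set.mem_ofPred_eq, MulAction.mem_orbit_iff, smul_eq_permAct, eq_comm]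

theorem ncard_orbit_mul_card_stabilizer {n : ℕ} [NeZero n] (f : BF n) :
    (orbit n f).ncard * Nat.card (MulAction.stabilizer (ZMod n)ˣ f) = n.totient := by
  rw [orbit_eq_mulActionOrbit, ← Nat.card_coe_set_eq, ← Nat.card_prod,
    Nat.card_congr (MulAction.orbitProdStabilizerEquivGroup _ f), Nat.card_eq_fintype_card,
    ZMod.card_units_eq_totient]

theorem mul_eq_self_of_mem_stabilizer_mrsOffsets {k e : ℕ} (hk : k ≠ 0) {a b : ZMod (3 ^ k)}
    (hcard : Nat.card (MulAction.stabilizer (ZMod (3 ^ k))ˣ (mrsOffsets (3 ^ k) a b)) = 3 ^ e)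
    {u : (ZMod (3 ^ k))ˣ}
    (hu : u ∈ MulAction.stabilizer (ZMod (3 ^ k))ˣ (mrsOffsets (3 ^ k) a b)) :
    (u : ZMod (3 ^ k)) * a = a ∧ (u : ZMod (3 ^ k)) * b = b := by
  have hpow : (u : ZMod (3 ^ k)) ^ 3 ^ e = 1 := by
    rw [← Units.val_pow_eq_pow_val, ← hcard,
      orderOf_dvd_iff_pow_eq_one.mp (Subgroup.orderOf_dvd_natCard _ hu), Units.val_one]
  obtain ⟨t, ht⟩ := ZMod.exists_eq_one_add_mul_of_pow_eq_one (dvd_pow_self 3 hk) hpow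
  have heq : mrsOffsets (3 ^ k) a b = mrsOffsets (3 ^ k) (u * a) (u * b) := by
    rw [← permAct_sigmaPerm_mrsOffsets, ← smul_eq_permAct, MulAction.mem_stabilizer_iff.mp hu]
  obtain ⟨m, hm⟩ := exists_vadd_subset_of_mrsOffsets_eq (Odd.pow (by decide)) heq
  rw [ht, Nat.cast_ofNat] at hm ⊢
  have h3 : IsNilpotent (3 : ZMod (3 ^ k)) := ⟨k, by exact_mod_cast ZMod.natCast_self (3 ^ k)⟩
  exact mul_eq_self_of_vadd_subset h3 hm

theorem card_stabilizer_of_ncard_orbit {k j : ℕ} (hjk : j < k) {f : BF (3 ^ k)}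
    (h : (orbit (3 ^ k) f).ncard = 2 * 3 ^ j) :
    Nat.card (MulAction.stabilizer (ZMod (3 ^ k))ˣ f) = 3 ^ (k - j - 1) := by
  have hos := ncard_orbit_mul_card_stabilizer f
  have hk : 3 ^ (k - 1) = 3 ^ (k - j - 1) * 3 ^ j := by rw [← pow_add]; congr 1; omega
  rw [h, Nat.totient_prime_pow Nat.prime_three (by omega), hk] at hos
  exact Nat.eq_of_mul_eq_mul_left (by positivity : 0 < 2 * 3 ^ j) (hos.trans (by ring))

theorem orbit_size_two_pow_three_general (k : ℕ) (n : ℕ) (hn : n = 3 ^ k) [NeZero n]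
    (j : ℕ) (hj1 : 1 ≤ j) (hj2 : j ≤ k - 2)
    (r s : ℕ) (hr : 1 < r) (hrs : r < s)
    (horb : (orbit n (cubicMRS n r s)).ncard = 2 * 3 ^ j) :
    ∀ τ : ℕ, ¬ (3 ∣ τ) →
      ((r - 1) * τ ^ (2 * 3 ^ j) + 1 ≡ r [MOD 3 ^ k] ∧
       (s - 1) * τ ^ (2 * 3 ^ j) + 1 ≡ s [MOD 3 ^ k] ∧
       r ≡ 1 [MOD 3 ^ (k - j - 1)] ∧ s ≡ 1 [MOD 3 ^ (k - j - 1)]) := by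
  subst hn
  rw [cubicMRS_eq_mrsOffsets] at horb
  have hH := card_stabilizer_of_ncard_orbit (by omega) horb
  have hr1 : 3 ^ (k - j - 1) ∣ r - 1 := ZMod.pow_dvd_of_le_stabilizer Nat.prime_three hH
    fun u hu => (mul_eq_self_of_mem_stabilizer_mrsOffsets (by omega) hH hu).1
  have hs1 : 3 ^ (k - j - 1) ∣ s - 1 := ZMod.pow_dvd_of_le_stabilizer Nat.prime_three hH
    fun u hu => (mul_eq_self_of_mem_stabilizer_mrsOffsets (by omega) hH hu).2
  intro τ hτ
  replace hτ : τ.Coprime (3 ^ (j + 1)) :=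
    ((Nat.Prime.coprime_iff_not_dvd Nat.prime_three).mpr hτ).symm.pow_right _
  have htot : (3 ^ (j + 1)).totient = 2 * 3 ^ j := by
    rw [Nat.totient_prime_pow Nat.prime_three j.succ_pos, Nat.succ_sub_one, mul_comm]
  have hk : 3 ^ k = 3 ^ (k - j - 1) * 3 ^ (j + 1) := by rw [← pow_add]; congr 1; omega
  rw [← htot]
  exact ⟨Nat.sub_one_mul_pow_totient_add_one_modEq (by omega) hτ
      (hk ▸ mul_dvd_mul_right hr1 _),
    Nat.sub_one_mul_pow_totient_add_one_modEq (by omega) hτ (hk ▸ mul_dvd_mul_right hs1 _),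
    ((Nat.modEq_iff_dvd' (by omega)).mpr hr1).symm,
    ((Nat.modEq_iff_dvd' (by omega)).mpr hs1).symm⟩

/-- For `n = 3^k`, `1 ≤ j ≤ k-2`: if the cubic MRS function `(1,r,s)` (with
`1 < r < s ≤ n`) lies in an orbit of the action of `G_n` of size exactly `2·3^j`, then
for every `τ` not divisible by 3 we have `(r-1)τ^{2·3^j} + 1 ≡ r` and
`(s-1)τ^{2·3^j} + 1 ≡ s (mod 3^k)`, and moreover
`r ≡ s ≡ 1 (mod 3^{k-j-1})`. -/
theorem orbit_size_two_pow_three (k : ℕ) (n : ℕ) (hn : n = 3 ^ k) [NeZero n]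
    (j : ℕ) (hj1 : 1 ≤ j) (hj2 : j ≤ k - 2)
    (r s : ℕ) (hr : 1 < r) (hrs : r < s) (hs : s ≤ n)
    (horb : (orbit n (cubicMRS n r s)).ncard = 2 * 3 ^ j) :
    ∀ τ : ℕ, ¬ (3 ∣ τ) →
      ((r - 1) * τ ^ (2 * 3 ^ j) + 1 ≡ r [MOD 3 ^ k] ∧
       (s - 1) * τ ^ (2 * 3 ^ j) + 1 ≡ s [MOD 3 ^ k] ∧
       r ≡ 1 [MOD 3 ^ (k - j - 1)] ∧ s ≡ 1 [MOD 3 ^ (k - j - 1)]) :=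
  orbit_size_two_pow_three_general k n hn j hj1 hj2 r s hr hrs horb
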